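/- Let n ≥ 3 and m ≥ 2. The Laplacian eigenvalues of the Kronecker product K_{n−1} × K_m are exactly 0, (m−1)(n−2)−1, n+(m−1)(n−2)−2, and (n−1)(m−1). Consequently, the algebraic connectivity of K_{n−1} × K_m equals (n−2)(m−1)−1. -/

import Mathlib

open scoped Classical

noncomputable section

namespace ArxivPaper

/-- The Kronecker (tensor) product of two simple graphs. -/
def tensorProd {α β : Type*} (G : SimpleGraph α) (H : SimpleGraph β) : SimpleGraph (α × β) where
  Adj p q := G.Adj p.1 q.1 ∧ H.Adj p.2 q.2
  symm := ⟨fun p q h => ⟨G.adj_symm h.1, H.adj_symm h.2⟩⟩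
  loopless := ⟨fun p h => G.irrefl h.1⟩

/-- The multiset of eigenvalues of a real matrix (roots of its characteristic polynomial,
with algebraic multiplicity). -/
def spec {n : Type*} [Fintype n] [DecidableEq n] (M : Matrix n n ℝ) : Multiset ℝ :=
  M.charpoly.roots

/-- Eigenvalues sorted in nondecreasing order. -/
def sortedSpec {n : Type*} [Fintype n] [DecidableEq n] (M : Matrix n n ℝ) : List ℝ :=
  (spec M).sort (· ≤ ·)

/-- The smallest eigenvalue of a real matrix. -/
def minEig {n : Type*} [Fintype n] [DecidableEq n] (M : Matrix n n ℝ) : ℝ :=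
  (sortedSpec M).getD 0 0

/-- The Laplacian spectrum of a finite simple graph. -/
def lapSpec {V : Type*} [Fintype V] (G : SimpleGraph V) : Multiset ℝ :=
  spec (G.lapMatrix ℝ)

/-- Algebraic connectivity: the second smallest Laplacian eigenvalue. -/
def algConn {V : Type*} [Fintype V] (G : SimpleGraph V) : ℝ :=
  (sortedSpec (G.lapMatrix ℝ)).getD 1 0

/-- `Q_{m-1}(G) = A(G) + (m-1)·D(G)` as a real matrix. -/
def qMatrix {V : Type*} [Fintype V] (G : SimpleGraph V) (m : ℕ) : Matrix V V ℝ :=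
  G.adjMatrix ℝ + ((m : ℝ) - 1) • G.degMatrix ℝ

/-- `q_min^{m-1}(G)`: the smallest eigenvalue of `Q_{m-1}(G)`. -/
def qMin {V : Type*} [Fintype V] (G : SimpleGraph V) (m : ℕ) : ℝ :=
  minEig (qMatrix G m)

/-- `β_m(X) = L(X) × K_m`. -/
def betaM {V : Type*} (G : SimpleGraph V) (m : ℕ) : SimpleGraph (G.edgeSet × Fin m) :=
  tensorProd G.lineGraph (⊤ : SimpleGraph (Fin m))

/-- The star graph `K_{1,n-1}` on `n` vertices, with center `0`. -/
def starGraph (n : ℕ) : SimpleGraph (Fin n) :=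
  SimpleGraph.fromRel fun u _ => (u : ℕ) = 0

/-- The tree `T(k,s,t)`: a path on `k+1` vertices with `s` pendant vertices attached to the
first vertex and `t` pendant vertices attached to the last vertex. -/
def treeT (k s t : ℕ) : SimpleGraph (Fin (k+1) ⊕ (Fin s ⊕ Fin t)) :=
  SimpleGraph.fromRel fun u v => match u, v with
    | .inl i, .inl j => (i : ℕ) + 1 = (j : ℕ)
    | .inr (.inl _), .inl i => (i : ℕ) = 0
    | .inr (.inr _), .inl i => (i : ℕ) = k
    | _, _ => False

/-!
For regular graphs of degrees `d` and `e`, the Laplacian of the tensor product is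
`d e • 1 - A ⊗ B`. The adjacency matrix `J - 1` of a complete graph on `a` vertices is
diagonalised by an explicit basis (the all-ones vector, eigenvalue `a - 1`, and the vectors
`e_j - e_z`, eigenvalue `-1`), so conjugation by the Kronecker product of two such bases
diagonalises the Laplacian of `K_a × K_b`, with diagonal entries `(a - 1)(b - 1) - λ μ`.
The four possible products give the spectrum; `0` occurs once and every other entry is at least
`(a - 1)(b - 1) - 1`, which is therefore the second smallest eigenvalue.
-/

open Matrix Polynomial Finset
open scoped Kronecker

section Spectrum

variable {ι : Type*} [Fintype ι] [DecidableEq ι]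

theorem spec_eq_of_mul_eq_mul_diagonal {M S : Matrix ι ι ℝ} {d : ι → ℝ} (hS : IsUnit S)
    (h : M * S = S * diagonal d) : spec M = univ.val.map d := by
  have hconj : diagonal d = hS.unit.val⁻¹ * M * hS.unit.val := by
    rw [IsUnit.unit_spec, Matrix.mul_assoc, h, ← Matrix.mul_assoc, Matrix.nonsing_inv_mul _
      ((Matrix.isUnit_iff_isUnit_det S).mp hS), Matrix.one_mul]
  rw [spec, ← charpoly_units_conj' hS.unit M, ← hconj, charpoly_diagonal,
    Polynomial.roots_prod _ _ (Finset.prod_ne_zero_iff.mpr fun i _ => X_sub_C_ne_zero (d i))]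
  simp

theorem getD_one_sort_map_univ {α : Type*} [LinearOrder α] (f : ι → α) (d : α) {i j : ι}
    (hij : i ≠ j) (hi : f i ≤ f j) (hj : ∀ k ≠ i, f j ≤ f k) :
    ((univ.val.map f).sort (· ≤ ·)).getD 1 d = f j := by
  set t := (univ.val.erase i).erase j
  have hj_mem : j ∈ univ.val.erase i := (Multiset.mem_erase_of_ne hij.symm).mpr (mem_univ_val j)
  have huniv : univ.val = i ::ₘ j ::ₘ t := by
    rw [Multiset.cons_erase hj_mem, Multiset.cons_erase (mem_univ_val i)]
  have ht : ∀ k ∈ t, k ≠ i := fun k hk =>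
    (univ.nodup.mem_erase_iff.mp (Multiset.mem_of_mem_erase hk)).1
  rw [huniv, Multiset.map_cons, Multiset.map_cons, Multiset.sort_cons, Multiset.sort_cons]
  · rfl
  · simpa using fun k hk => hj k (ht k hk)
  · simpa using ⟨hi, fun k hk => hi.trans (hj k (ht k hk))⟩

theorem spec_smul_one_sub_kronecker {κ : Type*} [Fintype κ] [DecidableEq κ]
    {A P : Matrix ι ι ℝ} {B Q : Matrix κ κ ℝ} {d : ι → ℝ} {e : κ → ℝ} (hP : IsUnit P)
    (hQ : IsUnit Q) (hA : A * P = P * diagonal d) (hB : B * Q = Q * diagonal e) (c : ℝ) :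
    spec (c • 1 - A ⊗ₖ B) = univ.val.map fun p : ι × κ => c - d p.1 * e p.2 := by
  refine spec_eq_of_mul_eq_mul_diagonal (hP.kronecker hQ) ?_
  have hdiag : diagonal (fun p : ι × κ => c - d p.1 * e p.2) =
      c • 1 - diagonal d ⊗ₖ diagonal e := by
    rw [diagonal_kronecker_diagonal, smul_one_eq_diagonal, diagonal_sub]
  rw [hdiag, sub_mul, mul_sub, ← mul_kronecker_mul, hA, hB, mul_kronecker_mul, smul_mul_assoc,
    mul_smul_comm, Matrix.one_mul, Matrix.mul_one]

end Spectrum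

section CompleteGraph

variable {V : Type*} [Fintype V] [DecidableEq V]

def completeEigvecs (z : V) : Matrix V V ℝ :=
  of fun i j => if j = z then 1 else (if i = j then 1 else 0) - (if i = z then 1 else 0)

def completeEigval (z : V) (j : V) : ℝ :=
  if j = z then (Fintype.card V : ℝ) - 1 else -1

theorem sum_completeEigvecs_apply (z j : V) :
    ∑ k, completeEigvecs z k j = if j = z then (Fintype.card V : ℝ) else 0 := by
  by_cases hj : j = z <;> simp [completeEigvecs, hj, Finset.sum_sub_distrib]

theorem adjMatrix_top_mul_completeEigvecs (z : V) :
    (⊤ : SimpleGraph V).adjMatrix ℝ * completeEigvecs z =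
      completeEigvecs z * diagonal (completeEigval z) := by
  ext i j
  have hrow : ∑ k, (if i = k then (0 : ℝ) else 1) * completeEigvecs z k j =
      ∑ k, completeEigvecs z k j - completeEigvecs z i j := by
    simp [ite_mul, Finset.sum_ite, Finset.filter_ne]
  rw [SimpleGraph.adjMatrix_top, mul_apply, mul_diagonal]
  simp only [of_apply]
  rw [hrow, sum_completeEigvecs_apply]
  by_cases hj : j = z <;> simp [completeEigvecs, completeEigval, hj]

theorem isUnit_completeEigvecs (z : V) : IsUnit (completeEigvecs z) := by
  have hcard : (Fintype.card V : ℝ) ≠ 0 := Nat.cast_ne_zero.mpr (Fintype.card_pos_iff.mpr ⟨z⟩).ne'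
  -- coordinates in the eigenbasis: `c_z = (∑ x) / |V|` and `c_j = x_j - (∑ x) / |V|`
  let Q : Matrix V V ℝ := of fun i k =>
    if i = z then (Fintype.card V : ℝ)⁻¹ else (if i = k then 1 else 0) - (Fintype.card V : ℝ)⁻¹
  have hQ : Q * completeEigvecs z = 1 := by
    ext i j
    rw [mul_apply]
    rcases eq_or_ne i z with rfl | hi
    · simp only [Q, of_apply, if_true, ← Finset.mul_sum, sum_completeEigvecs_apply]
      rcases eq_or_ne j i with rfl | hj
      · simp [hcard]
      · simp [hj, hj.symm]
    · simp only [Q, of_apply, hi, if_false, sub_mul, Finset.sum_sub_distrib, ← Finset.mul_sum,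
        sum_completeEigvecs_apply, ite_mul, one_mul, zero_mul, Finset.sum_ite_eq, mem_univ]
      by_cases hj : j = z <;> simp [completeEigvecs, hj, hi, hcard, one_apply]
  exact IsUnit.of_mul_eq_one_right Q hQ

end CompleteGraph

section TensorProd

variable {α β : Type*} (G : SimpleGraph α) (H : SimpleGraph β)

@[simp]
theorem tensorProd_adj {p q : α × β} :
    (tensorProd G H).Adj p q ↔ G.Adj p.1 q.1 ∧ H.Adj p.2 q.2 :=
  Iff.rfl

variable [DecidableRel G.Adj] [DecidableRel H.Adj]

theorem adjMatrix_tensorProd (R : Type*) [MulZeroOneClass R] :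
    (tensorProd G H).adjMatrix R = G.adjMatrix R ⊗ₖ H.adjMatrix R := by
  ext p q
  simp only [SimpleGraph.adjMatrix_apply, kroneckerMap_apply, tensorProd_adj,
    ite_zero_mul_ite_zero, mul_one]

variable [Fintype α] [Fintype β]

theorem neighborFinset_tensorProd (p : α × β) :
    (tensorProd G H).neighborFinset p = G.neighborFinset p.1 ×ˢ H.neighborFinset p.2 := by
  ext q
  simp

theorem degree_tensorProd (p : α × β) :
    (tensorProd G H).degree p = G.degree p.1 * H.degree p.2 := by
  rw [← SimpleGraph.card_neighborFinset_eq_degree, neighborFinset_tensorProd, card_product,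
    SimpleGraph.card_neighborFinset_eq_degree, SimpleGraph.card_neighborFinset_eq_degree]

theorem lapMatrix_tensorProd_of_isRegularOfDegree (R : Type*) [Ring R] [DecidableEq α]
    [DecidableEq β] {d e : ℕ} (hG : G.IsRegularOfDegree d) (hH : H.IsRegularOfDegree e) :
    (tensorProd G H).lapMatrix R = ((d * e : ℕ) : R) • 1 - G.adjMatrix R ⊗ₖ H.adjMatrix R := by
  rw [SimpleGraph.lapMatrix, adjMatrix_tensorProd, SimpleGraph.degMatrix, smul_one_eq_diagonal]
  congr 2
  ext p
  rw [degree_tensorProd, hG p.1, hH p.2]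

end TensorProd

/-- `lapSpec` is elaborated with classical decidability instances; this frees us from them. -/
theorem lapSpec_eq_spec_lapMatrix {V : Type*} [Fintype V] [DecidableEq V] (G : SimpleGraph V)
    [DecidableRel G.Adj] : lapSpec G = spec (G.lapMatrix ℝ) := by
  unfold lapSpec
  congr!

section CompleteTensorComplete

variable {V W : Type*} [Fintype V] [DecidableEq V] [Fintype W] [DecidableEq W]

theorem lapSpec_tensorProd_top (z : V) (w : W) :
    lapSpec (tensorProd (⊤ : SimpleGraph V) (⊤ : SimpleGraph W)) =
      univ.val.map fun p : V × W => ((Fintype.card V : ℝ) - 1) * ((Fintype.card W : ℝ) - 1) -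
        completeEigval z p.1 * completeEigval w p.2 := by
  have hV : 1 ≤ Fintype.card V := Fintype.card_pos_iff.mpr ⟨z⟩
  have hW : 1 ≤ Fintype.card W := Fintype.card_pos_iff.mpr ⟨w⟩
  rw [lapSpec_eq_spec_lapMatrix, lapMatrix_tensorProd_of_isRegularOfDegree _ _ ℝ
    SimpleGraph.IsRegularOfDegree.top SimpleGraph.IsRegularOfDegree.top]
  push_cast [hV, hW]
  exact spec_smul_one_sub_kronecker (isUnit_completeEigvecs z) (isUnit_completeEigvecs w)
    (adjMatrix_top_mul_completeEigvecs z) (adjMatrix_top_mul_completeEigvecs w) _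

theorem mem_lapSpec_tensorProd_top (hV : 1 < Fintype.card V) (hW : 1 < Fintype.card W)
    (x : ℝ) :
    x ∈ lapSpec (tensorProd (⊤ : SimpleGraph V) (⊤ : SimpleGraph W)) ↔
      x = 0 ∨ x = ((Fintype.card V : ℝ) - 1) * ((Fintype.card W : ℝ) - 1) - 1 ∨
        x = ((Fintype.card V : ℝ) - 1) * Fintype.card W ∨
        x = Fintype.card V * ((Fintype.card W : ℝ) - 1) := by
  obtain ⟨z, z', hz⟩ := Fintype.exists_pair_of_one_lt_card hV
  obtain ⟨w, w', hw⟩ := Fintype.exists_pair_of_one_lt_card hW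
  rw [lapSpec_tensorProd_top z w, Multiset.mem_map]
  constructor
  · rintro ⟨⟨i, j⟩, -, rfl⟩
    rcases eq_or_ne i z with rfl | hi <;> rcases eq_or_ne j w with rfl | hj
    · left; simp [completeEigval]
    · right; right; left; simp [completeEigval, hj]; ring
    · right; right; right; simp [completeEigval, hi]; ring
    · right; left; simp [completeEigval, hi, hj]
  · rintro (rfl | rfl | rfl | rfl)
    · exact ⟨(z, w), mem_univ_val _, by simp [completeEigval]⟩
    · exact ⟨(z', w'), mem_univ_val _, by simp [completeEigval, hz.symm, hw.symm]⟩
    · exact ⟨(z, w'), mem_univ_val _, by simp [completeEigval, hw.symm]; ring⟩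
    · exact ⟨(z', w), mem_univ_val _, by simp [completeEigval, hz.symm]; ring⟩

theorem algConn_tensorProd_top (hV : 1 < Fintype.card V) (hW : 1 < Fintype.card W) :
    algConn (tensorProd (⊤ : SimpleGraph V) (⊤ : SimpleGraph W)) =
      ((Fintype.card V : ℝ) - 1) * ((Fintype.card W : ℝ) - 1) - 1 := by
  obtain ⟨z, z', hz⟩ := Fintype.exists_pair_of_one_lt_card hV
  obtain ⟨w, w', hw⟩ := Fintype.exists_pair_of_one_lt_card hW
  have hV' : (1 : ℝ) ≤ Fintype.card V - 1 := by
    rw [le_sub_iff_add_le]; exact_mod_cast hV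
  have hW' : (1 : ℝ) ≤ Fintype.card W - 1 := by
    rw [le_sub_iff_add_le]; exact_mod_cast hW
  change ((lapSpec _).sort (· ≤ ·)).getD 1 0 = _
  rw [lapSpec_tensorProd_top z w, getD_one_sort_map_univ _ _ (i := (z, w)) (j := (z', w'))]
  · simp [completeEigval, hz.symm, hw.symm]
  · simp [hz]
  · simp [completeEigval, hz.symm, hw.symm]
    nlinarith
  · rintro ⟨i, j⟩ hij
    rcases eq_or_ne i z with rfl | hi <;> rcases eq_or_ne j w with rfl | hj
    · exact absurd rfl hij
    · simp [completeEigval, hz.symm, hw.symm, hj]; nlinarith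
    · simp [completeEigval, hz.symm, hw.symm, hi]; nlinarith
    · simp [completeEigval, hz.symm, hw.symm, hi, hj]

end CompleteTensorComplete

/-- the Laplacian eigenvalues of `K_{n-1} × K_m` and its algebraic connectivity. -/
theorem lapSpec_complete_tensor_complete (n m : ℕ) (hn : 3 ≤ n) (hm : 2 ≤ m) :
    (∀ x : ℝ,
      x ∈ lapSpec (tensorProd (⊤ : SimpleGraph (Fin (n-1))) (⊤ : SimpleGraph (Fin m))) ↔
        (x = 0 ∨ x = ((m:ℝ)-1)*((n:ℝ)-2) - 1 ∨
         x = (n:ℝ) + ((m:ℝ)-1)*((n:ℝ)-2) - 2 ∨ x = ((n:ℝ)-1)*((m:ℝ)-1))) ∧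
    algConn (tensorProd (⊤ : SimpleGraph (Fin (n-1))) (⊤ : SimpleGraph (Fin m))) =
      ((n:ℝ)-2)*((m:ℝ)-1) - 1 := by
  have hV : 1 < Fintype.card (Fin (n - 1)) := by rw [Fintype.card_fin]; omega
  have hW : 1 < Fintype.card (Fin m) := by rw [Fintype.card_fin]; omega
  have hcard : (Fintype.card (Fin (n - 1)) : ℝ) = n - 1 := by
    rw [Fintype.card_fin, Nat.cast_sub (by omega), Nat.cast_one]
  refine ⟨fun x => ?_, ?_⟩
  · rw [mem_lapSpec_tensorProd_top hV hW, hcard, Fintype.card_fin,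
      show ((n : ℝ) - 1 - 1) * ((m : ℝ) - 1) - 1 = ((m : ℝ) - 1) * ((n : ℝ) - 2) - 1 by ring,
      show ((n : ℝ) - 1 - 1) * m = n + ((m : ℝ) - 1) * ((n : ℝ) - 2) - 2 by ring]
  · rw [algConn_tensorProd_top hV hW, hcard, Fintype.card_fin]
    ring

end ArxivPaper
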